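/- arXiv:2408.02108 — 4 statements merged into one kernel-verified Lean document; each statement's English description precedes it below -/
import Mathlib

section
/- Let a ≥ 0, b > 0, and R : ℝ≥0 → ℝ satisfy R(t) = a·t + b·t³ + O(t⁴) as t → 0⁺ (i.e., there exist c, t_c > 0 with |R(t) − a·t − b·t³| ≤ c·t⁴ for 0 ≤ t ≤ t_c). Define I(x) = sup_{t ≥ 0} (x·t − R(t)). Then for x ≥ a with x − a sufficiently small, I(x) ≥ (2/√(27b))·(x−a)^{3/2} − (c/(3b)²)·(x−a)². -/
open scoped Real

/-
Take the point t at which the cubic model x t − a t − b t³ is maximal, i.e. x − a = 3 b t².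
There the model equals (2/√(27 b)) (x − a)^{3/2} = 2 b t³, and the error term c t⁴ equals
c (x − a)² / (3 b)². For x − a ≤ 3 b t_c² this t lies in [0, t_c], where the bound on R applies.
-/

theorem two_div_sqrt_mul_rpow_three_half {b t : ℝ} (hb : 0 < b) (ht : 0 ≤ t) :
    2 / √(27 * b) * (3 * b * t ^ 2) ^ ((3 : ℝ) / 2) = 2 * b * t ^ 3 := by
  have h3b : 0 < √(3 * b) := Real.sqrt_pos.mpr (by positivity)
  have hsqrt27 : √(27 * b) = 3 * √(3 * b) := by
    rw [show (27 : ℝ) * b = 3 ^ 2 * (3 * b) by ring, Real.sqrt_mul (by norm_num),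
      Real.sqrt_sq (by norm_num)]
  have hrpow : (3 * b * t ^ 2) ^ ((3 : ℝ) / 2) = 3 * b * t ^ 2 * (√(3 * b) * t) := by
    rw [show ((3 : ℝ) / 2) = 1 + 1 / 2 by norm_num, Real.rpow_add' (by positivity) (by norm_num),
      Real.rpow_one, ← Real.sqrt_eq_rpow, Real.sqrt_mul (by positivity), Real.sqrt_sq ht]
  rw [hsqrt27, hrpow]
  field_simp

theorem exists_nonneg_eq_three_mul_sq {b s : ℝ} (hb : 0 < b) (hs : 0 ≤ s) :
    ∃ t, 0 ≤ t ∧ s = 3 * b * t ^ 2 :=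
  ⟨√(s / (3 * b)), Real.sqrt_nonneg _, by rw [Real.sq_sqrt (by positivity)]; field_simp⟩

theorem legendre_boundary_three_half_general (a b c tc : ℝ) (hb : 0 < b)
    (htc : 0 < tc) (R : ℝ → ℝ)
    (hR : ∀ t : ℝ, 0 ≤ t → t ≤ tc → |R t - (a * t + b * t ^ 3)| ≤ c * t ^ 4)
    (I : ℝ → EReal)
    (hI : ∀ x : ℝ, I x = ⨆ t : {t : ℝ // 0 ≤ t}, ((x * t - R t : ℝ) : EReal)) :
    ∃ δ > 0, ∀ x : ℝ, a ≤ x → x - a ≤ δ →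
      ((2 / Real.sqrt (27 * b) * (x - a) ^ ((3 : ℝ) / 2)
        - c / (3 * b) ^ 2 * (x - a) ^ 2 : ℝ) : EReal) ≤ I x := by
  refine ⟨3 * b * tc ^ 2, by positivity, fun x hax hxδ => ?_⟩
  obtain ⟨t, ht, hxt⟩ := exists_nonneg_eq_three_mul_sq hb (sub_nonneg.mpr hax)
  have httc : t ≤ tc := by
    rw [← pow_le_pow_iff_left₀ ht htc.le two_ne_zero]
    rw [hxt] at hxδ
    exact le_of_mul_le_mul_left hxδ (by positivity)
  have hRt := (abs_le.mp (hR t ht httc)).2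
  have hcubic : 2 * b * t ^ 3 - c * t ^ 4 ≤ x * t - R t := by
    have hx : x = a + 3 * b * t ^ 2 := by linarith
    rw [hx]
    linarith
  have herror : c / (3 * b) ^ 2 * (3 * b * t ^ 2) ^ 2 = c * t ^ 4 := by
    field_simp
  rw [hI, hxt, two_div_sqrt_mul_rpow_three_half hb ht, herror]
  exact le_iSup_of_le (⟨t, ht⟩ : {t : ℝ // 0 ≤ t}) (EReal.coe_le_coe_iff.mpr hcubic)

theorem legendre_boundary_three_half (a b c tc : ℝ) (ha : 0 ≤ a) (hb : 0 < b)
    (hc : 0 < c) (htc : 0 < tc) (R : ℝ → ℝ)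
    (hR : ∀ t : ℝ, 0 ≤ t → t ≤ tc → |R t - (a * t + b * t ^ 3)| ≤ c * t ^ 4)
    (I : ℝ → EReal)
    (hI : ∀ x : ℝ, I x = ⨆ t : {t : ℝ // 0 ≤ t}, ((x * t - R t : ℝ) : EReal)) :
    ∃ δ > 0, ∀ x : ℝ, a ≤ x → x - a ≤ δ →
      ((2 / Real.sqrt (27 * b) * (x - a) ^ ((3 : ℝ) / 2)
        - c / (3 * b) ^ 2 * (x - a) ^ 2 : ℝ) : EReal) ≤ I x :=
  legendre_boundary_three_half_general a b c tc hb htc R hR I hI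
end

section
/- Let 0 < a < 1 and R(λ) = 2·arcsinh(a·sinh(|λ|/2)) for λ ∈ ℝ. Then for a < x < 1, the equation R'(λ) = x has the unique positive solution λ(x) = 2·log((√(x²−a²) + x·√(1−a²))/(a·√(1−x²))). -/
/-!
Writing `u = sinh (l / 2)`, for `l > 0` the derivative of `R` is
`a √(1 + u²) / √(1 + a²u²)`. Squaring, the equation `R' l = x` becomes linear in `u²`, with the
single nonnegative root `u = √(x² - a²) / (a √(1 - x²))`; and the closed form of `lam x` is
`2 arsinh u`, since `√(1 + u²) = x √(1 - a²) / (a √(1 - x²))`.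
-/

open Real

noncomputable section

def rateSlope (a u : ℝ) : ℝ :=
  a * √(1 + u ^ 2) / √(1 + (a * u) ^ 2)

def slopeRoot (a x : ℝ) : ℝ :=
  √(x ^ 2 - a ^ 2) / (a * √(1 - x ^ 2))

end

theorem hasDerivAt_two_mul_arsinh_mul_sinh_half (a l : ℝ) :
    HasDerivAt (fun t => 2 * arsinh (a * sinh (t / 2))) (rateSlope a (sinh (l / 2))) l := by
  refine ((((hasDerivAt_id' l).div_const 2).sinh.const_mul a).arsinh.const_mul 2).congr_deriv ?_
  rw [rateSlope, ← cosh_sq', sqrt_sq (cosh_pos _).le, smul_eq_mul]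
  field_simp

theorem deriv_two_mul_arsinh_mul_sinh_abs_half {a l : ℝ} {R : ℝ → ℝ}
    (hR : ∀ l : ℝ, R l = 2 * arsinh (a * sinh (|l| / 2))) (hl : 0 < l) :
    deriv R l = rateSlope a (sinh (l / 2)) := by
  have hRl : R =ᶠ[nhds l] fun t => 2 * arsinh (a * sinh (t / 2)) := by
    filter_upwards [Ioi_mem_nhds hl] with t ht
    rw [hR t, abs_of_pos ht]
  rw [hRl.deriv_eq, (hasDerivAt_two_mul_arsinh_mul_sinh_half a l).deriv]

section

variable {a x : ℝ} (ha : 0 < a) (hax : a ≤ x) (hx1 : x < 1)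
include ha hax hx1

theorem sq_slopeRoot : slopeRoot a x ^ 2 = (x ^ 2 - a ^ 2) / (a ^ 2 * (1 - x ^ 2)) := by
  have hxa : 0 ≤ x ^ 2 - a ^ 2 := by nlinarith
  have h1x : 0 ≤ 1 - x ^ 2 := by nlinarith
  rw [slopeRoot, div_pow, mul_pow, sq_sqrt hxa, sq_sqrt h1x]

theorem rateSlope_eq_iff {u : ℝ} (hu : 0 ≤ u) : rateSlope a u = x ↔ u = slopeRoot a x := by
  have h1x : 0 < 1 - x ^ 2 := by nlinarith
  have hpos : 0 < 1 + (a * u) ^ 2 := by positivity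
  have hroot : 0 ≤ slopeRoot a x := by unfold slopeRoot; positivity
  have hsq : rateSlope a u ^ 2 = a ^ 2 * (1 + u ^ 2) / (1 + (a * u) ^ 2) := by
    rw [rateSlope, div_pow, mul_pow, sq_sqrt (by positivity), sq_sqrt hpos.le]
  rw [← sq_eq_sq₀ (by unfold rateSlope; positivity) (ha.le.trans hax), hsq,
    ← sq_eq_sq₀ hu hroot, sq_slopeRoot ha hax hx1, div_eq_iff hpos.ne',
    eq_div_iff (by positivity)]
  constructor <;> intro h <;> linear_combination h

theorem arsinh_slopeRoot :
    arsinh (slopeRoot a x) =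
      log ((√(x ^ 2 - a ^ 2) + x * √(1 - a ^ 2)) / (a * √(1 - x ^ 2))) := by
  have h1x : 0 < 1 - x ^ 2 := by nlinarith
  have h1a : 0 ≤ 1 - a ^ 2 := by nlinarith
  have hcosh : √(1 + slopeRoot a x ^ 2) = x * √(1 - a ^ 2) / (a * √(1 - x ^ 2)) := by
    rw [sqrt_eq_iff_eq_sq (by positivity) (by have := ha.trans_le hax; positivity),
      sq_slopeRoot ha hax hx1, div_pow, mul_pow, mul_pow, sq_sqrt h1a, sq_sqrt h1x.le]
    field_simp
    ring
  rw [arsinh, hcosh, slopeRoot, ← add_div]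

end

theorem rate_deriv_unique_solution_general (a : ℝ) (ha : 0 < a)
    (R : ℝ → ℝ) (hR : ∀ l : ℝ, R l = 2 * Real.arsinh (a * Real.sinh (|l| / 2)))
    (lam : ℝ → ℝ)
    (hlam : ∀ x : ℝ, lam x =
      2 * Real.log ((Real.sqrt (x ^ 2 - a ^ 2) + x * Real.sqrt (1 - a ^ 2)) /
        (a * Real.sqrt (1 - x ^ 2)))) :
    ∀ x : ℝ, a < x → x < 1 →
      0 < lam x ∧ deriv R (lam x) = x ∧
        ∀ l : ℝ, 0 < l → deriv R l = x → l = lam x := by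
  intro x hax hx1
  have hlamx : lam x = 2 * arsinh (slopeRoot a x) := by
    rw [hlam, arsinh_slopeRoot ha hax.le hx1]
  have hroot : 0 < slopeRoot a x := by
    have : 0 < x ^ 2 - a ^ 2 := by nlinarith
    have : 0 < 1 - x ^ 2 := by nlinarith
    unfold slopeRoot; positivity
  have hlam_pos : 0 < lam x := by
    rw [hlamx]; exact mul_pos two_pos (arsinh_pos_iff.2 hroot)
  refine ⟨hlam_pos, ?_, fun l hl hRl => ?_⟩
  · rw [deriv_two_mul_arsinh_mul_sinh_abs_half hR hlam_pos, hlamx,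
      mul_div_cancel_left₀ _ two_ne_zero, sinh_arsinh, rateSlope_eq_iff ha hax.le hx1 hroot.le]
  · rw [deriv_two_mul_arsinh_mul_sinh_abs_half hR hl,
      rateSlope_eq_iff ha hax.le hx1 (sinh_pos_iff.2 (half_pos hl)).le] at hRl
    rw [hlamx, ← hRl, arsinh_sinh]
    ring

theorem rate_deriv_unique_solution (a : ℝ) (ha : 0 < a) (ha1 : a < 1)
    (R : ℝ → ℝ) (hR : ∀ l : ℝ, R l = 2 * Real.arsinh (a * Real.sinh (|l| / 2)))
    (lam : ℝ → ℝ)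
    (hlam : ∀ x : ℝ, lam x =
      2 * Real.log ((Real.sqrt (x ^ 2 - a ^ 2) + x * Real.sqrt (1 - a ^ 2)) /
        (a * Real.sqrt (1 - x ^ 2)))) :
    ∀ x : ℝ, a < x → x < 1 →
      0 < lam x ∧ deriv R (lam x) = x ∧
        ∀ l : ℝ, 0 < l → deriv R l = x → l = lam x :=
  rate_deriv_unique_solution_general a ha R hR lam hlam
end

section
/- For c₁, c₂, c₃ ∈ [0,1] with c₁c₂c₃ < 1, the quantity 1 − ((1−c₃)(1−c₁c₂) + c₃(1−c₁)(1−c₂))/(1−c₁c₂c₃) lies in [0,1], i.e. the squared group velocity |∇ω|² of ω(p) = arccos(cos p₁ cos p₂ cos p₃) is at most 1, with equality approached as c₁ = c₂ = c₃ → 1. -/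
/-!
Denominator minus numerator is `c₁c₂(1 - c₃) + c₁c₃(1 - c₂) + c₂c₃(1 - c₁) ≥ 0`, so the quantity
is a ratio of nonnegative numbers; it is at most `1` since the subtracted fraction is nonnegative.
On the diagonal the factor `1 - c` cancels, leaving `3c² / (1 + c + c²)`, which tends to `1`.
-/

open Set Filter Topology

noncomputable def groupVelocitySq (c₁ c₂ c₃ : ℝ) : ℝ :=
  1 - ((1 - c₃) * (1 - c₁ * c₂) + c₃ * (1 - c₁) * (1 - c₂)) / (1 - c₁ * c₂ * c₃)

theorem groupVelocitySq_eq {c₁ c₂ c₃ : ℝ} (h : c₁ * c₂ * c₃ ≠ 1) :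
    groupVelocitySq c₁ c₂ c₃ =
      (c₁ * c₂ * (1 - c₃) + c₁ * c₃ * (1 - c₂) + c₂ * c₃ * (1 - c₁)) / (1 - c₁ * c₂ * c₃) := by
  rw [groupVelocitySq, one_sub_div (sub_ne_zero.2 h.symm)]
  ring

section UnitCube

variable {c₁ c₂ c₃ : ℝ} (h₁ : c₁ ∈ Icc (0 : ℝ) 1) (h₂ : c₂ ∈ Icc (0 : ℝ) 1)
  (h₃ : c₃ ∈ Icc (0 : ℝ) 1) (hlt : c₁ * c₂ * c₃ < 1)

include h₁ h₂ h₃ hlt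

theorem groupVelocitySq_nonneg : 0 ≤ groupVelocitySq c₁ c₂ c₃ := by
  obtain ⟨h₁0, h₁1⟩ := h₁
  obtain ⟨h₂0, h₂1⟩ := h₂
  obtain ⟨h₃0, h₃1⟩ := h₃
  rw [groupVelocitySq_eq hlt.ne]
  refine div_nonneg ?_ (sub_nonneg.2 hlt.le)
  have := mul_nonneg (mul_nonneg h₁0 h₂0) (sub_nonneg.2 h₃1)
  have := mul_nonneg (mul_nonneg h₁0 h₃0) (sub_nonneg.2 h₂1)
  have := mul_nonneg (mul_nonneg h₂0 h₃0) (sub_nonneg.2 h₁1)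
  linarith

theorem groupVelocitySq_le_one : groupVelocitySq c₁ c₂ c₃ ≤ 1 := by
  obtain ⟨-, h₁1⟩ := h₁
  obtain ⟨h₂0, h₂1⟩ := h₂
  obtain ⟨h₃0, h₃1⟩ := h₃
  have hN : 0 ≤ (1 - c₃) * (1 - c₁ * c₂) + c₃ * (1 - c₁) * (1 - c₂) :=
    add_nonneg (mul_nonneg (sub_nonneg.2 h₃1) (sub_nonneg.2 (mul_le_one₀ h₁1 h₂0 h₂1)))
      (mul_nonneg (mul_nonneg h₃0 (sub_nonneg.2 h₁1)) (sub_nonneg.2 h₂1))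
  exact sub_le_self _ (div_nonneg hN (sub_nonneg.2 hlt.le))

end UnitCube

theorem groupVelocitySq_diag {c : ℝ} (hc : c ≠ 1) :
    groupVelocitySq c c c = 3 * c ^ 2 / (1 + c + c ^ 2) := by
  have hq : 1 + c + c ^ 2 ≠ 0 := by nlinarith [sq_nonneg (c + 1 / 2)]
  have hc' : 1 - c ≠ 0 := sub_ne_zero.2 hc.symm
  have hD : 1 - c * c * c ≠ 0 := by
    rw [show 1 - c * c * c = (1 - c) * (1 + c + c ^ 2) by ring]
    exact mul_ne_zero hc' hq
  rw [groupVelocitySq_eq (fun h => hD (by rw [h]; ring)), div_eq_div_iff hD hq]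
  ring

theorem tendsto_groupVelocitySq_diag :
    Tendsto (fun c => groupVelocitySq c c c) (𝓝[≠] 1) (𝓝 1) := by
  have hcont : ContinuousAt (fun c : ℝ => 3 * c ^ 2 / (1 + c + c ^ 2)) 1 :=
    ContinuousAt.div (by fun_prop) (by fun_prop) (by norm_num)
  have hlim : Tendsto (fun c : ℝ => 3 * c ^ 2 / (1 + c + c ^ 2)) (𝓝 1) (𝓝 1) := by
    convert hcont.tendsto
    norm_num
  refine (hlim.mono_left nhdsWithin_le_nhds).congr' ?_
  filter_upwards [self_mem_nhdsWithin] with c hc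
  exact (groupVelocitySq_diag hc).symm

theorem group_velocity_3d_bound :
    (∀ c₁ c₂ c₃ : ℝ, c₁ ∈ Set.Icc (0:ℝ) 1 → c₂ ∈ Set.Icc (0:ℝ) 1 → c₃ ∈ Set.Icc (0:ℝ) 1 →
      c₁ * c₂ * c₃ < 1 →
      1 - ((1 - c₃) * (1 - c₁ * c₂) + c₃ * (1 - c₁) * (1 - c₂)) / (1 - c₁ * c₂ * c₃)
        ∈ Set.Icc (0:ℝ) 1) ∧
    Filter.Tendsto
      (fun c : ℝ => 1 - ((1 - c) * (1 - c * c) + c * (1 - c) * (1 - c)) / (1 - c * c * c))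
      (nhdsWithin 1 (Set.Iio 1)) (nhds 1) :=
  ⟨fun _ _ _ h₁ h₂ h₃ hlt =>
      ⟨groupVelocitySq_nonneg h₁ h₂ h₃ hlt, groupVelocitySq_le_one h₁ h₂ h₃ hlt⟩,
    tendsto_groupVelocitySq_diag.mono_left
      (nhdsWithin_mono _ fun _ (hc : _ < 1) => hc.ne)⟩
end

section
/- Let ω(εp₁, εp₂) = arccos(cos(εp₁)·cos(εp₂)). Then as ε → 0, ω(εp) = ε·|p| − (ε³/6)·p₁²p₂²/|p| + O(ε⁵) for p ≠ 0, where |p| = √(p₁²+p₂²). In particular ω has a conical (non-differentiable) singularity at the origin. -/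
/-!
Write `q ε = cos (ε a) cos (ε b)` and `m ε = ε r - ε³ a²b² / (6 r)` with `r = ‖(a, b)‖`. The
Taylor polynomial of cosine up to order 4 gives `q ε = cos (m ε) + O(ε⁶)`. Since `sin (m ε)` is of
order `ε`, inverting the cosine near `m ε` loses one power of `ε`, so `arccos (q ε) = m ε + O(ε⁵)`.
On the first axis `ω (t, 0) = |t|`, so `ω` is not differentiable at the origin.
-/

open Asymptotics Filter Topology Real

noncomputable def cosTaylor4 (x : ℝ) : ℝ := 1 - x ^ 2 / 2 + x ^ 4 / 24

lemma abs_cos_sub_cosTaylor4_le {x : ℝ} (hx : |x| ≤ 1) :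
    |cos x - cosTaylor4 x| ≤ |x| ^ 6 * (7 / 4320) := by
  have hexp :=
    Complex.exp_bound (x := x * Complex.I) (by simpa using hx) (n := 6) (by norm_num)
  have hsum : ∑ m ∈ Finset.range 6, ((x : ℂ) * Complex.I) ^ m / m.factorial
      = ((1 - x ^ 2 / 2 + x ^ 4 / 24 : ℝ) : ℂ)
        + ((x - x ^ 3 / 6 + x ^ 5 / 120 : ℝ) : ℂ) * Complex.I := by
    simp only [Finset.sum_range_succ, Finset.sum_range_zero, Nat.factorial, mul_pow,
      Complex.I_pow_four, pow_succ Complex.I 4, pow_succ Complex.I 2, Complex.I_sq]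
    push_cast
    ring
  have hre : cos x - cosTaylor4 x = (Complex.exp (x * Complex.I)
      - ∑ m ∈ Finset.range 6, ((x : ℂ) * Complex.I) ^ m / m.factorial).re := by
    rw [cosTaylor4, Complex.sub_re, Complex.exp_ofReal_mul_I_re, hsum]
    simp only [Complex.add_re, Complex.ofReal_re, Complex.mul_re, Complex.I_re, Complex.I_im,
      Complex.ofReal_im]
    ring
  rw [hre]
  refine (Complex.abs_re_le_norm _).trans (hexp.trans_eq ?_)
  norm_num [Nat.factorial]

lemma cos_sub_cosTaylor4_isBigO :
    (fun x => cos x - cosTaylor4 x) =O[𝓝 0] fun x => x ^ 6 := by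
  refine IsBigO.of_bound (7 / 4320) ?_
  filter_upwards [Metric.closedBall_mem_nhds (0 : ℝ) one_pos] with x hx
  rw [Real.norm_eq_abs, Real.norm_eq_abs, abs_pow, mul_comm]
  exact abs_cos_sub_cosTaylor4_le (by simpa using hx)

lemma cos_comp_sub_cosTaylor4_isBigO {g : ℝ → ℝ} (hg : g =O[𝓝 0] id) :
    (fun ε => cos (g ε) - cosTaylor4 (g ε)) =O[𝓝 0] fun ε => ε ^ 6 :=
  (cos_sub_cosTaylor4_isBigO.comp_tendsto (hg.trans_tendsto tendsto_id)).trans (hg.pow 6)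

lemma exists_continuous_cosTaylor4_mul_sub_cosTaylor4_eq {a b r : ℝ} (hr0 : r ≠ 0)
    (hr : r ^ 2 = a ^ 2 + b ^ 2) :
    ∃ W : ℝ → ℝ, Continuous W ∧ ∀ ε, cosTaylor4 (ε * a) * cosTaylor4 (ε * b)
      - cosTaylor4 (ε * r - ε ^ 3 / 6 * (a ^ 2 * b ^ 2 / r)) = ε ^ 6 * W ε := by
  have hab : a ^ 2 + b ^ 2 ≠ 0 := hr ▸ pow_ne_zero 2 hr0
  -- The `ε³` term of `m ε` is what makes the `ε⁴` coefficients, `(a⁴ + 6 a²b² + b⁴) / 24`, agree.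
  refine ⟨fun ε => a ^ 2 * b ^ 2 * (a ^ 4 + 4 * a ^ 2 * b ^ 2 + b ^ 4) / (144 * (a ^ 2 + b ^ 2))
      - ε ^ 2 * a ^ 4 * b ^ 4 / 192 + ε ^ 4 * a ^ 6 * b ^ 6 / (1296 * (a ^ 2 + b ^ 2))
      - ε ^ 6 * a ^ 8 * b ^ 8 / (31104 * (a ^ 2 + b ^ 2) ^ 2), by fun_prop, fun ε => ?_⟩
  have hm2 : (ε * r - ε ^ 3 / 6 * (a ^ 2 * b ^ 2 / r)) ^ 2
      = ε ^ 2 * (a ^ 2 + b ^ 2) - ε ^ 4 * a ^ 2 * b ^ 2 / 3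
        + ε ^ 6 * a ^ 4 * b ^ 4 / (36 * (a ^ 2 + b ^ 2)) := by
    rw [← hr]; field_simp; ring
  have hP : ∀ x, cosTaylor4 x = 1 - x ^ 2 / 2 + (x ^ 2) ^ 2 / 24 := fun x => by
    rw [cosTaylor4]; ring
  rw [hP (ε * r - _), hm2, cosTaylor4, cosTaylor4]
  field_simp
  ring

lemma isBigO_id_of_eq_mul {f g : ℝ → ℝ} (hg : Continuous g) (hf : ∀ ε, f ε = ε * g ε) :
    f =O[𝓝 0] id :=
  ((isBigO_refl id _).mul ((hg.tendsto 0).isBigO_one ℝ)).congr (fun ε => (hf ε).symm)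
    fun _ => mul_one _

lemma cos_mul_cos_sub_cos_isBigO {a b r : ℝ} (hr0 : r ≠ 0) (hr : r ^ 2 = a ^ 2 + b ^ 2) :
    (fun ε => cos (ε * a) * cos (ε * b) - cos (ε * r - ε ^ 3 / 6 * (a ^ 2 * b ^ 2 / r)))
      =O[𝓝 0] fun ε => ε ^ 6 := by
  have hlin : ∀ c : ℝ, (fun ε : ℝ => ε * c) =O[𝓝 0] id := fun c =>
    isBigO_id_of_eq_mul continuous_const fun _ => rfl
  have hm : (fun ε : ℝ => ε * r - ε ^ 3 / 6 * (a ^ 2 * b ^ 2 / r)) =O[𝓝 0] id :=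
    isBigO_id_of_eq_mul (g := fun ε => r - ε ^ 2 / 6 * (a ^ 2 * b ^ 2 / r)) (by fun_prop)
      fun ε => by ring
  obtain ⟨W, hW, hPW⟩ := exists_continuous_cosTaylor4_mul_sub_cosTaylor4_eq hr0 hr
  have hrem_a : (fun ε => (cos (ε * a) - cosTaylor4 (ε * a)) * cos (ε * b)) =O[𝓝 0]
      fun ε => ε ^ 6 := by
    simpa using (cos_comp_sub_cosTaylor4_isBigO (hlin a)).mul
      (((by fun_prop : Continuous fun ε : ℝ => cos (ε * b)).tendsto 0).isBigO_one ℝ)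
  have hrem_b : (fun ε => cosTaylor4 (ε * a) * (cos (ε * b) - cosTaylor4 (ε * b))) =O[𝓝 0]
      fun ε => ε ^ 6 := by
    have hP : Continuous fun ε : ℝ => cosTaylor4 (ε * a) := by unfold cosTaylor4; fun_prop
    simpa using ((hP.tendsto 0).isBigO_one ℝ).mul (cos_comp_sub_cosTaylor4_isBigO (hlin b))
  have hrem_W : (fun ε => ε ^ 6 * W ε) =O[𝓝 0] fun ε => ε ^ 6 := by
    simpa using (isBigO_refl (fun ε : ℝ => ε ^ 6) (𝓝 0)).mul ((hW.tendsto 0).isBigO_one ℝ)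
  refine (((hrem_a.add hrem_b).add hrem_W).sub (cos_comp_sub_cosTaylor4_isBigO hm)).congr_left
    fun ε => ?_
  linear_combination -hPW ε

lemma abs_arccos_sub_le {q m θ : ℝ} (hθ : 0 ≤ θ) (hθm : θ ≤ m) (hmθ : m + θ ≤ π)
    (hq : |q - cos m| ≤ sin m * sin θ - (1 - cos θ)) : |arccos q - m| ≤ θ := by
  obtain ⟨hq₁, hq₂⟩ := abs_le.mp hq
  -- `q` lies between `cos (m + θ)` and `cos (m - θ)`, and `arccos` is antitone.
  have hupper : cos (m + θ) ≤ q := by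
    rw [cos_add]
    nlinarith [neg_one_le_cos m, cos_le_one θ]
  have hlower : q ≤ cos (m - θ) := by
    rw [cos_sub]
    nlinarith [cos_le_one m, cos_le_one θ]
  have h₁ := arccos_le_arccos hupper
  have h₂ := arccos_le_arccos hlower
  rw [arccos_cos (by linarith) hmθ] at h₁
  rw [arccos_cos (by linarith) (by linarith)] at h₂
  exact abs_le.mpr ⟨by linarith, by linarith⟩

lemma arccos_sub_isBigO_of_cos_sub_isBigO {k : ℕ} (hk : 2 ≤ k) {q g : ℝ → ℝ} {c : ℝ}
    (hc : 0 < c) (hg : Tendsto g (𝓝[>] 0) (𝓝 0)) (hgc : ∀ᶠ ε in 𝓝[>] 0, c * ε ≤ g ε)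
    (hq : (fun ε => q ε - cos (g ε)) =O[𝓝[>] 0] fun ε => ε ^ (k + 1)) :
    (fun ε => arccos (q ε) - g ε) =O[𝓝[>] 0] fun ε => ε ^ k := by
  obtain ⟨j, rfl⟩ : ∃ j, k = j + 2 := ⟨k - 2, by omega⟩
  obtain ⟨B, hB, hqB⟩ := hq.exists_pos
  -- With `θ = C ε ^ (j + 2)`, this makes `(2/π * c ε) * (2/π * θ) = (B + 1) ε ^ (j + 3)`.
  set C := π ^ 2 * (B + 1) / (4 * c) with hC
  have hC0 : 0 < C := by positivity
  have hsmall : ∀ᶠ ε in 𝓝[>] (0 : ℝ), C * ε ^ (j + 1) ≤ min c (2 / C) := by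
    have : Tendsto (fun ε : ℝ => C * ε ^ (j + 1)) (𝓝 0) (𝓝 0) :=
      (by fun_prop : Continuous fun ε : ℝ => C * ε ^ (j + 1)).tendsto' 0 0 (by simp)
    exact (this.mono_left nhdsWithin_le_nhds).eventually (ge_mem_nhds (by positivity))
  refine IsBigO.of_bound C ?_
  have hgπ : ∀ᶠ ε in 𝓝[>] (0 : ℝ), g ε ≤ π / 2 := hg.eventually (ge_mem_nhds (by positivity))
  filter_upwards [self_mem_nhdsWithin, hqB.bound, hgc, hgπ, hsmall]
    with ε (hε : 0 < ε) hqε hgε hgπ hsmallε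
  simp only [Real.norm_eq_abs, abs_of_pos (pow_pos hε _)] at hqε ⊢
  set θ := C * ε ^ (j + 2) with hθ
  have hθ0 : 0 ≤ θ := by positivity
  have hθg : θ ≤ g ε := by
    calc θ = C * ε ^ (j + 1) * ε := by ring
      _ ≤ c * ε := by gcongr; exact hsmallε.trans (min_le_left _ _)
      _ ≤ g ε := hgε
  have hsin_g : 2 / π * (c * ε) ≤ sin (g ε) :=
    (by gcongr : 2 / π * (c * ε) ≤ 2 / π * g ε).trans (mul_le_sin (by linarith) hgπ)
  have hsin_θ : 2 / π * θ ≤ sin θ := mul_le_sin hθ0 (by linarith)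
  have hcos_θ : 1 - cos θ ≤ ε ^ (j + 3) := by
    have h := hsmallε.trans (min_le_right _ _)
    calc 1 - cos θ ≤ θ ^ 2 / 2 := by linarith [one_sub_sq_div_two_le_cos (x := θ)]
      _ = C * (C * ε ^ (j + 1)) * ε ^ (j + 3) / 2 := by ring
      _ ≤ C * (2 / C) * ε ^ (j + 3) / 2 := by gcongr
      _ = ε ^ (j + 3) := by field_simp
  have hprod : (B + 1) * ε ^ (j + 3) ≤ sin (g ε) * sin θ := by
    calc (B + 1) * ε ^ (j + 3) = 2 / π * (c * ε) * (2 / π * θ) := by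
          rw [hθ, hC]; field_simp; ring
      _ ≤ sin (g ε) * sin θ :=
          mul_le_mul hsin_g hsin_θ (by positivity) ((by positivity : (0 : ℝ) ≤ _).trans hsin_g)
  exact abs_arccos_sub_le hθ0 hθg (by linarith) (by linarith)

lemma arccos_cos_mul_cos_sub_isBigO {a b r : ℝ} (hr0 : 0 < r) (hr : r ^ 2 = a ^ 2 + b ^ 2) :
    (fun ε => arccos (cos (ε * a) * cos (ε * b)) - (ε * r - ε ^ 3 / 6 * (a ^ 2 * b ^ 2 / r)))
      =O[𝓝[>] 0] fun ε => ε ^ 5 := by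
  have hcont : Continuous fun ε : ℝ => ε * r - ε ^ 3 / 6 * (a ^ 2 * b ^ 2 / r) := by fun_prop
  have hcorr : ∀ᶠ ε in 𝓝[>] (0 : ℝ), ε ^ 2 / 6 * (a ^ 2 * b ^ 2 / r) ≤ r / 2 :=
    ((by fun_prop : Continuous fun ε : ℝ => ε ^ 2 / 6 * (a ^ 2 * b ^ 2 / r)).tendsto' 0 0
      (by simp)).mono_left nhdsWithin_le_nhds |>.eventually (ge_mem_nhds (by positivity))
  refine arccos_sub_isBigO_of_cos_sub_isBigO (by norm_num) (half_pos hr0)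
    ((hcont.tendsto' 0 0 (by simp)).mono_left nhdsWithin_le_nhds) ?_
    ((cos_mul_cos_sub_cos_isBigO hr0.ne' hr).mono nhdsWithin_le_nhds)
  filter_upwards [self_mem_nhdsWithin, hcorr] with ε (hε : 0 < ε) hεcorr
  nlinarith

lemma arccos_cos_eq_abs {t : ℝ} (ht : |t| ≤ π) : arccos (cos t) = |t| := by
  rw [← cos_abs, arccos_cos (abs_nonneg t) ht]

lemma not_differentiableAt_of_eventuallyEq_abs {E : Type*} [NormedAddCommGroup E]
    [NormedSpace ℝ E] {f : E → ℝ} (v : E) (hf : (fun t : ℝ => f (t • v)) =ᶠ[𝓝 0] fun t => |t|) :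
    ¬ DifferentiableAt ℝ f 0 := fun hdiff => by
  have hline : DifferentiableAt ℝ (fun t : ℝ => f (t • v)) 0 :=
    (zero_smul ℝ v ▸ hdiff).comp 0 (differentiableAt_id.smul_const v)
  exact not_differentiableAt_abs_zero (hf.differentiableAt_iff.mp hline)

theorem conical_expansion_2d
    (ω : EuclideanSpace ℝ (Fin 2) → ℝ)
    (hω : ∀ p, ω p = Real.arccos (Real.cos (p 0) * Real.cos (p 1))) :
    (∀ p : EuclideanSpace ℝ (Fin 2), p ≠ 0 →
      (fun ε : ℝ => ω (ε • p) -
          (ε * ‖p‖ - ε ^ 3 / 6 * ((p 0) ^ 2 * (p 1) ^ 2 / ‖p‖)))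
        =O[nhdsWithin 0 (Set.Ioi 0)] fun ε : ℝ => ε ^ 5) ∧
      ¬ DifferentiableAt ℝ ω 0 := by
  refine ⟨fun p hp => ?_, ?_⟩
  · have hnorm : ‖p‖ ^ 2 = p 0 ^ 2 + p 1 ^ 2 := by
      simp [EuclideanSpace.real_norm_sq_eq, Fin.sum_univ_two]
    simpa [hω] using arccos_cos_mul_cos_sub_isBigO (norm_pos_iff.mpr hp) hnorm
  · refine not_differentiableAt_of_eventuallyEq_abs (EuclideanSpace.single 0 1) ?_
    filter_upwards [Metric.closedBall_mem_nhds (0 : ℝ) pi_pos] with t ht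
    simpa [hω] using arccos_cos_eq_abs (by simpa using ht)
end
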